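/- (Anosov) Let (X, μ) be a measurable space with a finite measure μ, F : X → X measurable with μ invariant, and γ ∈ L¹(X, μ). If there is a measurable function φ : X → ℝ satisfying φ(F x) − φ(x) = γ(x) for all x ∈ X, then φ(F^n x)/n → 0 as n → ∞ for μ-almost every x ∈ X, and consequently ∫_X γ dμ = 0. -/

import Mathlib

/-!
Write `γ = φ ∘ F - φ`, so that the Birkhoff sums of `γ` telescope to `φ ∘ F^[n] - φ`.

Truncating `φ` at height `K` produces bounded transfer functions whose coboundaries have integral
zero by invariance, and which converge to `γ` dominated by `|γ|`; hence `∫ γ = 0`, and likewise on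
every invariant set.

For `ε > 0` the set `A` of points where `φ (F^[n] x)` exceeds slope `ε` infinitely often is
invariant. On `A` some Birkhoff sum of `γ - ε` is positive, so the maximal ergodic theorem gives
`0 ≤ ∫_A (γ - ε) = -ε μ A`, i.e. `μ A = 0`. Applied to `φ` and `-φ` this yields
`φ (F^[n] x) / n → 0` almost everywhere.
-/

open MeasureTheory Filter

theorem eventually_mul_add_le_mul {a b : ℝ} (hab : a < b) (c : ℝ) :
    ∀ᶠ n : ℕ in atTop, a * n + c ≤ b * n := by
  filter_upwards
    [(tendsto_natCast_atTop_atTop.const_mul_atTop (sub_pos.2 hab)).eventually_ge_atTop c]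
    with n hn
  linarith

theorem tendsto_div_natCast_zero_of_abs_le {s : ℕ → ℝ}
    (h : ∀ m : ℕ, ∀ᶠ n in atTop, |s n| ≤ 1 / (m + 1) * n) :
    Tendsto (fun n => s n / n) atTop (nhds 0) := by
  refine Metric.tendsto_nhds.2 fun η hη => ?_
  obtain ⟨m, hm⟩ := exists_nat_one_div_lt hη
  filter_upwards [h m, eventually_gt_atTop 0] with n hs hn
  have hn' : (0 : ℝ) < n := Nat.cast_pos.2 hn
  rw [Real.dist_eq, sub_zero, abs_div, Nat.abs_cast, div_lt_iff₀ hn']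
  nlinarith

/-- A robust form of `ε < limsup s n / n`: the rational witness keeps the corresponding sets of
points countable unions, and the strict gap `ε < q` makes the property insensitive to shifting
the sequence. -/
def FrequentlyAboveSlope (ε : ℝ) (s : ℕ → ℝ) : Prop :=
  ∃ q : ℚ, ε < q ∧ ∃ᶠ n in atTop, (q : ℝ) * n < s n

namespace FrequentlyAboveSlope

variable {ε : ℝ} {s : ℕ → ℝ}

theorem comp_succ_iff :
    FrequentlyAboveSlope ε (fun n => s (n + 1)) ↔ FrequentlyAboveSlope ε s := by
  have hshift (P : ℕ → Prop) : (∃ᶠ n in atTop, P (n + 1)) ↔ ∃ᶠ n in atTop, P n := by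
    rw [← frequently_map (m := (· + 1)), map_add_atTop_eq_nat]
  constructor
  · rintro ⟨q, hεq, hq⟩
    obtain ⟨r, hεr, hrq⟩ := exists_rat_btwn hεq
    refine ⟨r, hεr, (hshift fun n => (r : ℝ) * n < s n).1 ?_⟩
    refine (hq.and_eventually (eventually_mul_add_le_mul hrq r)).mono fun n ⟨hn, hrn⟩ => ?_
    push_cast
    linarith
  · rintro ⟨q, hεq, hq⟩
    obtain ⟨r, hεr, hrq⟩ := exists_rat_btwn hεq
    refine ⟨r, hεr, ?_⟩
    refine (((hshift fun n => (q : ℝ) * n < s n).2 hq).and_eventually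
      (eventually_mul_add_le_mul hrq (-q))).mono fun n ⟨hn, hrn⟩ => ?_
    push_cast at hn
    linarith

theorem exists_lt (h : FrequentlyAboveSlope ε s) (c : ℝ) : ∃ n : ℕ, ε * n + c < s n := by
  obtain ⟨q, hεq, hq⟩ := h
  obtain ⟨n, hn, hqn⟩ := (hq.and_eventually (eventually_mul_add_le_mul hεq c)).exists
  exact ⟨n, hqn.trans_lt hn⟩

theorem eventually_le_of_not (h : ¬FrequentlyAboveSlope ε s) {δ : ℝ} (hεδ : ε < δ) :
    ∀ᶠ n in atTop, s n ≤ δ * n := by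
  obtain ⟨r, hεr, hrδ⟩ := exists_rat_btwn hεδ
  have hr : ∀ᶠ n in atTop, s n ≤ r * n := by
    simp only [FrequentlyAboveSlope, not_exists, not_and, not_frequently, not_lt] at h
    exact h r hεr
  exact hr.mono fun n hn => hn.trans (by gcongr)

end FrequentlyAboveSlope

section BirkhoffSum

variable {X : Type*} {f : X → X} {g : X → ℝ}

theorem birkhoffSum_comp_sub (f : X → X) (φ : X → ℝ) (n : ℕ) (x : X) :
    birkhoffSum f (fun y => φ (f y) - φ y) n x = φ (f^[n] x) - φ x := by
  simp only [birkhoffSum, ← Function.iterate_succ_apply' f]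
  exact Finset.sum_range_sub (fun k => φ (f^[k] x)) n

theorem partialSups_birkhoffSum_nonneg (n : ℕ) (x : X) :
    0 ≤ partialSups (birkhoffSum f g) n x := by
  rw [Pi.partialSups_apply]
  exact (birkhoffSum_zero f g x).symm.le.trans
    (le_partialSups_of_le (birkhoffSum f g · x) (Nat.zero_le n))

theorem partialSups_birkhoffSum_le_max (n : ℕ) (x : X) :
    partialSups (birkhoffSum f g) n x ≤ max 0 (g x + partialSups (birkhoffSum f g) n (f x)) := by
  rw [Pi.partialSups_apply, partialSups_le_iff]
  rintro (_ | k) hk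
  · exact le_max_left _ _
  · refine le_max_of_le_right ?_
    rw [birkhoffSum_succ', Pi.partialSups_apply, add_le_add_iff_left]
    exact le_partialSups_of_le (birkhoffSum f g · (f x)) (Nat.le_of_succ_le hk)

theorem pos_partialSups_birkhoffSum_iff {n : ℕ} {x : X} :
    0 < partialSups (birkhoffSum f g) n x ↔ ∃ k ≤ n, 0 < birkhoffSum f g k x := by
  simp only [Pi.partialSups_apply, ← not_le, partialSups_le_iff, not_forall, exists_prop]

theorem preimage_setOf_frequentlyAboveSlope (f : X → X) (φ : X → ℝ) (ε : ℝ) :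
    f ⁻¹' {x | FrequentlyAboveSlope ε fun n => φ (f^[n] x)} =
      {x | FrequentlyAboveSlope ε fun n => φ (f^[n] x)} :=
  Set.ext fun x => FrequentlyAboveSlope.comp_succ_iff (s := fun n => φ (f^[n] x))

end BirkhoffSum

section Measurable

variable {X : Type*} [MeasurableSpace X] {μ : Measure X} {f : X → X} {g : X → ℝ} {φ : X → ℝ}

theorem measurable_birkhoffSum (hf : Measurable f) (hg : Measurable g) (n : ℕ) :
    Measurable (birkhoffSum f g n) :=
  Finset.measurable_sum _ fun k _ => hg.comp (hf.iterate k)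

theorem measurable_partialSups_birkhoffSum (hf : Measurable f) (hg : Measurable g) (n : ℕ) :
    Measurable (partialSups (birkhoffSum f g) n) := by
  rw [partialSups_apply]
  exact Finset.measurable_sup' _ fun k _ => measurable_birkhoffSum hf hg k

theorem measurableSet_setOf_frequentlyAboveSlope (hf : Measurable f) (hφ : Measurable φ)
    (ε : ℝ) : MeasurableSet {x | FrequentlyAboveSlope ε fun n => φ (f^[n] x)} := by
  have : {x | FrequentlyAboveSlope ε fun n => φ (f^[n] x)} =
      ⋃ q : ℚ, {_x | ε < q} ∩ limsup (fun n => {x | (q : ℝ) * n < φ (f^[n] x)}) atTop := by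
    ext x
    simp [FrequentlyAboveSlope, mem_limsup_iff_frequently_mem]
  rw [this]
  exact .iUnion fun q => (MeasurableSet.const _).inter <|
    MeasurableSet.measurableSet_limsup fun n =>
      measurableSet_lt measurable_const (hφ.comp (hf.iterate n))

end Measurable

namespace MeasureTheory.MeasurePreserving

variable {X : Type*} [MeasurableSpace X] {μ : Measure X} {f : X → X} {g : X → ℝ} {φ : X → ℝ}

theorem integral_comp_of_aestronglyMeasurable {Y E : Type*} [MeasurableSpace Y]
    [NormedAddCommGroup E] [NormedSpace ℝ E] {ν : Measure Y} {f : X → Y}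
    (hf : MeasurePreserving f μ ν) {g : Y → E} (hg : AEStronglyMeasurable g ν) :
    ∫ x, g (f x) ∂μ = ∫ y, g y ∂ν := by
  rw [← integral_map hf.aemeasurable (hf.map_eq.symm ▸ hg), hf.map_eq]

theorem integrable_birkhoffSum (hf : MeasurePreserving f μ μ) (hg : Integrable g μ) (n : ℕ) :
    Integrable (birkhoffSum f g n) μ :=
  integrable_finsetSum _ fun k _ => (hf.iterate k).integrable_comp_of_integrable hg

theorem integrable_partialSups_birkhoffSum (hf : MeasurePreserving f μ μ) (hg : Integrable g μ)
    (n : ℕ) : Integrable (partialSups (birkhoffSum f g) n) μ := by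
  rw [partialSups_apply]
  exact Finset.sup'_induction _ _ (p := (Integrable · μ)) (fun _ h₁ _ h₂ => h₁.sup h₂)
    fun k _ => hf.integrable_birkhoffSum hg k

theorem integral_comp_sub_eq_zero [IsFiniteMeasure μ] (hf : MeasurePreserving f μ μ)
    (hφ : Measurable φ) (hint : Integrable (fun x => φ (f x) - φ x) μ) :
    ∫ x, (φ (f x) - φ x) ∂μ = 0 := by
  set ψ : ℕ → X → ℝ := fun K x => max (min (φ x) K) (-K)
  have hψ_meas (K : ℕ) : Measurable (ψ K) := (hφ.min measurable_const).max measurable_const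
  have hψ_int (K : ℕ) : Integrable (ψ K) μ := by
    refine Integrable.of_bound (hψ_meas K).aestronglyMeasurable K
      (Eventually.of_forall fun x => ?_)
    simp only [ψ, Real.norm_eq_abs, abs_le]
    constructor <;> simp
  have hψ_zero (K : ℕ) : ∫ x, (ψ K (f x) - ψ K x) ∂μ = 0 := by
    rw [integral_sub (f := fun x => ψ K (f x)) (hf.integrable_comp_of_integrable (hψ_int K))
      (hψ_int K), hf.integral_comp_of_aestronglyMeasurable (hψ_meas K).aestronglyMeasurable,
      sub_self]
  have hψ_lip (K : ℕ) (a b : X) : |ψ K a - ψ K b| ≤ |φ a - φ b| :=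
    (abs_max_sub_max_le_abs _ _ _).trans <|
      (abs_min_sub_min_le_max _ _ _ _).trans_eq (by simp)
  have hψ_eventually (y : X) : ∀ᶠ K : ℕ in atTop, ψ K y = φ y := by
    filter_upwards [eventually_ge_atTop ⌈|φ y|⌉₊] with K hK
    have hy : |φ y| ≤ K := (Nat.le_ceil _).trans (Nat.cast_le.2 hK)
    rw [abs_le] at hy
    simp only [ψ, min_eq_left hy.2, max_eq_left hy.1]
  have hlim : Tendsto (fun K : ℕ => ∫ x, (ψ K (f x) - ψ K x) ∂μ) atTop
      (nhds (∫ x, (φ (f x) - φ x) ∂μ)) := by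
    refine tendsto_integral_of_dominated_convergence (fun x => |φ (f x) - φ x|)
      (fun K => ((hψ_meas K).comp hf.measurable).sub (hψ_meas K) |>.aestronglyMeasurable)
      hint.abs (fun K => Eventually.of_forall fun x => hψ_lip K (f x) x) ?_
    refine Eventually.of_forall fun x => tendsto_const_nhds.congr' ?_
    filter_upwards [hψ_eventually x, hψ_eventually (f x)] with K hx hfx
    rw [hx, hfx]
  simp only [hψ_zero] at hlim
  exact tendsto_nhds_unique hlim tendsto_const_nhds

/-- Garsia's proof of the maximal ergodic theorem, for the running maximum `M` of the first
`n + 1` Birkhoff sums: on `{M > 0}` one has `M ≤ g + M ∘ f`, and `M ≥ 0` everywhere. -/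
theorem setIntegral_partialSups_birkhoffSum_pos_nonneg (hf : MeasurePreserving f μ μ)
    (hgm : Measurable g) (hg : Integrable g μ) (n : ℕ) :
    0 ≤ ∫ x in {x | 0 < partialSups (birkhoffSum f g) n x}, g x ∂μ := by
  set M := partialSups (birkhoffSum f g) n
  set E := {x | 0 < M x}
  have hM := hf.integrable_partialSups_birkhoffSum hg n
  have hMf : Integrable (M ∘ f) μ := hf.integrable_comp_of_integrable hM
  have hE : MeasurableSet E :=
    measurableSet_lt measurable_const (measurable_partialSups_birkhoffSum hf.measurable hgm n)
  have hM_on : ∫ x in E, M x ∂μ = ∫ x, M x ∂μ :=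
    setIntegral_eq_integral_of_forall_compl_eq_zero fun x hx =>
      le_antisymm (not_lt.1 hx) (partialSups_birkhoffSum_nonneg n x)
  have hMf_on : ∫ x in E, M (f x) ∂μ ≤ ∫ x, M (f x) ∂μ :=
    setIntegral_le_integral hMf
      (Eventually.of_forall fun x => partialSups_birkhoffSum_nonneg n (f x))
  have hMf_eq : ∫ x, M (f x) ∂μ = ∫ x, M x ∂μ :=
    hf.integral_comp_of_aestronglyMeasurable hM.aestronglyMeasurable
  have hpointwise : ∀ x ∈ E, M x - M (f x) ≤ g x := fun x hx => by
    have := (le_max_iff.1 (partialSups_birkhoffSum_le_max n x)).resolve_left (not_le.2 hx)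
    linarith
  calc 0 ≤ ∫ x in E, M x ∂μ - ∫ x in E, M (f x) ∂μ := by linarith
    _ = ∫ x in E, (M x - M (f x)) ∂μ := (integral_sub hM.integrableOn hMf.integrableOn).symm
    _ ≤ ∫ x in E, g x ∂μ :=
      setIntegral_mono_on (hM.sub hMf).integrableOn hg.integrableOn hE hpointwise

theorem setIntegral_birkhoffSum_pos_nonneg (hf : MeasurePreserving f μ μ) (hgm : Measurable g)
    (hg : Integrable g μ) : 0 ≤ ∫ x in {x | ∃ n, 0 < birkhoffSum f g n x}, g x ∂μ := by
  set E : ℕ → Set X := fun n => {x | 0 < partialSups (birkhoffSum f g) n x}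
  have hE_meas (n : ℕ) : MeasurableSet (E n) :=
    measurableSet_lt measurable_const (measurable_partialSups_birkhoffSum hf.measurable hgm n)
  have hE_mono : Monotone E := fun m n hmn x hx =>
    lt_of_lt_of_le hx (partialSups_monotone (birkhoffSum f g) hmn x)
  have hE_union : ⋃ n, E n = {x | ∃ n, 0 < birkhoffSum f g n x} := by
    ext x
    simp only [E, Set.mem_iUnion, Set.mem_ofPred_eq, pos_partialSups_birkhoffSum_iff]
    exact ⟨fun ⟨_, k, _, hk⟩ => ⟨k, hk⟩, fun ⟨k, hk⟩ => ⟨k, k, le_rfl, hk⟩⟩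
  have hlim := tendsto_setIntegral_of_monotone hE_meas hE_mono hg.integrableOn
  rw [hE_union] at hlim
  exact ge_of_tendsto' hlim fun n => hf.setIntegral_partialSups_birkhoffSum_pos_nonneg hgm hg n

theorem integral_nonneg_of_ae_exists_birkhoffSum_pos (hf : MeasurePreserving f μ μ)
    (hgm : Measurable g) (hg : Integrable g μ) (hpos : ∀ᵐ x ∂μ, ∃ n, 0 < birkhoffSum f g n x) :
    0 ≤ ∫ x, g x ∂μ := by
  rw [← setIntegral_univ, ← setIntegral_congr_set (ae_eq_univ.2 hpos)]
  exact hf.setIntegral_birkhoffSum_pos_nonneg hgm hg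

theorem measure_setOf_frequentlyAboveSlope_eq_zero [IsFiniteMeasure μ]
    (hf : MeasurePreserving f μ μ) (hφ : Measurable φ)
    (hint : Integrable (fun x => φ (f x) - φ x) μ) {ε : ℝ} (hε : 0 < ε) :
    μ {x | FrequentlyAboveSlope ε fun n => φ (f^[n] x)} = 0 := by
  set A := {x | FrequentlyAboveSlope ε fun n => φ (f^[n] x)}
  have hA : MeasurableSet A := measurableSet_setOf_frequentlyAboveSlope hf.measurable hφ ε
  have hfA : MeasurePreserving f (μ.restrict A) (μ.restrict A) := by
    simpa only [A, preimage_setOf_frequentlyAboveSlope] using hf.restrict_preimage hA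
  set g : X → ℝ := fun x => φ (f x) - φ x - ε
  have hpos : ∀ᵐ x ∂μ.restrict A, ∃ n, 0 < birkhoffSum f g n x := by
    refine (ae_restrict_iff' hA).2 (Eventually.of_forall fun x hx => ?_)
    obtain ⟨n, hn⟩ := FrequentlyAboveSlope.exists_lt hx (φ x)
    have hsum : birkhoffSum f g n x = φ (f^[n] x) - φ x - n * ε := by
      rw [show g = (fun y => φ (f y) - φ y) - fun _ => ε from rfl, birkhoffSum_sub,
        birkhoffSum_comp_sub]
      simp [birkhoffSum]
    exact ⟨n, by linarith⟩
  have hnonneg := hfA.integral_nonneg_of_ae_exists_birkhoffSum_pos (g := g)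
    (((hφ.comp hf.measurable).sub hφ).sub measurable_const)
    (hint.restrict.sub (integrable_const ε)) hpos
  rw [integral_sub hint.restrict (integrable_const ε),
    hfA.integral_comp_sub_eq_zero hφ hint.restrict, integral_const,
    measureReal_restrict_apply_univ, smul_eq_mul] at hnonneg
  have : μ.real A = 0 := by nlinarith [measureReal_nonneg (μ := μ) (s := A)]
  exact (measureReal_eq_zero_iff).1 this

theorem ae_eventually_comp_iterate_le [IsFiniteMeasure μ] (hf : MeasurePreserving f μ μ)
    (hφ : Measurable φ) (hint : Integrable (fun x => φ (f x) - φ x) μ) {δ : ℝ} (hδ : 0 < δ) :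
    ∀ᵐ x ∂μ, ∀ᶠ n in atTop, φ (f^[n] x) ≤ δ * n :=
  (measure_eq_zero_iff_ae_notMem.1
    (hf.measure_setOf_frequentlyAboveSlope_eq_zero hφ hint (half_pos hδ))).mono
    fun _ hx => FrequentlyAboveSlope.eventually_le_of_not hx (half_lt_self hδ)

theorem ae_tendsto_comp_iterate_div [IsFiniteMeasure μ] (hf : MeasurePreserving f μ μ)
    (hφ : Measurable φ) (hint : Integrable (fun x => φ (f x) - φ x) μ) :
    ∀ᵐ x ∂μ, Tendsto (fun n : ℕ => φ (f^[n] x) / n) atTop (nhds 0) := by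
  have hint_neg : Integrable (fun x => -φ (f x) - -φ x) μ :=
    hint.neg.congr (Eventually.of_forall fun x => by simp only [Pi.neg_apply]; ring)
  have hupper := ae_all_iff.2 fun m : ℕ =>
    hf.ae_eventually_comp_iterate_le hφ hint (δ := 1 / (m + 1)) Nat.one_div_pos_of_nat
  have hlower := ae_all_iff.2 fun m : ℕ =>
    hf.ae_eventually_comp_iterate_le hφ.neg hint_neg (δ := 1 / (m + 1)) Nat.one_div_pos_of_nat
  filter_upwards [hupper, hlower] with x hu hl
  refine tendsto_div_natCast_zero_of_abs_le fun m => ?_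
  filter_upwards [hu m, hl m] with n hun hln
  rw [Pi.neg_apply] at hln
  exact abs_le.2 ⟨by linarith, hun⟩

end MeasureTheory.MeasurePreserving

/-- Anosov: if `μ` is a finite invariant measure, `γ ∈ L¹(X, μ)` and
`φ` is a measurable (not necessarily integrable) solution of the cohomological
equation, then `φ(F^n x)/n → 0` a.e. and `∫ γ dμ = 0`. -/
theorem anosov_trivial_necessary_condition
    {X : Type*} [MeasurableSpace X] (μ : Measure X) [IsFiniteMeasure μ]
    (F : X → X) (hF : Measurable F)
    (hinv : ∀ M : Set X, MeasurableSet M → μ (F ⁻¹' M) = μ M)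
    (γ : X → ℝ) (hγ : Integrable γ μ)
    (φ : X → ℝ) (hφm : Measurable φ)
    (hsol : ∀ x, φ (F x) - φ x = γ x) :
    (∀ᵐ x ∂μ, Tendsto (fun n : ℕ => φ (F^[n] x) / n) atTop (nhds 0)) ∧
    ∫ x, γ x ∂μ = 0 := by
  have hF_mp : MeasurePreserving F μ μ :=
    ⟨hF, Measure.ext fun s hs => by rw [Measure.map_apply hF hs, hinv s hs]⟩
  obtain rfl : γ = fun x => φ (F x) - φ x := funext fun x => (hsol x).symm
  exact ⟨hF_mp.ae_tendsto_comp_iterate_div hφm hγ, hF_mp.integral_comp_sub_eq_zero hφm hγ⟩
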